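/- arXiv:2411.12376 — 2 statements merged into one kernel-verified Lean document; each statement's English description precedes it below -/
import Mathlib

section
/- Let {s_k} be a monotonically decreasing sequence of nonnegative reals converging to 0, and suppose there exist constants α > 1 and β > 0 such that s_k^α ≤ β (s_k − s_{k+1}) for all sufficiently large k. Then there exists a constant η > 0 such that s_k ≤ η k^{−1/(α−1)} for all sufficiently large k. -/
open Filter

/-- Bernoulli-type inequality for negative exponents: for `0 < x ≤ 1` and `q > 0`,
`1 + q * (1 - x) ≤ x ^ (-q)`. -/
lemma aux_bernoulli_neg (x q : ℝ) (hx0 : 0 < x) (hx1 : x ≤ 1) (hq : 0 < q) :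
    1 + q * (1 - x) ≤ x ^ (-q) := by
  have h1 : x ^ (-q) = Real.exp (-q * Real.log x) := by
    rw [Real.rpow_def_of_pos hx0, mul_comm]
  have h2 : 1 + q * (1 - x) ≤ Real.exp (q * (1 - x)) := by
    have := Real.add_one_le_exp (q * (1 - x))
    linarith
  refine h2.trans ?_
  rw [h1]
  apply Real.exp_le_exp.2
  have hlog := Real.log_le_sub_one_of_pos hx0
  nlinarith

/-- Key convexity inequality: for `0 < b ≤ a` and `q > 0`,
`a ^ (-q) + q * (a - b) * a ^ (-q - 1) ≤ b ^ (-q)`. -/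
lemma aux_key (a b q : ℝ) (hb : 0 < b) (hba : b ≤ a) (hq : 0 < q) :
    a ^ (-q) + q * (a - b) * a ^ (-q - 1) ≤ b ^ (-q) := by
  have ha : 0 < a := lt_of_lt_of_le hb hba
  have hx0 : 0 < b / a := div_pos hb ha
  have hx1 : b / a ≤ 1 := (div_le_one ha).2 hba
  have hber := aux_bernoulli_neg (b / a) q hx0 hx1 hq
  have hbeq : b ^ (-q) = (b / a) ^ (-q) * a ^ (-q) := by
    rw [← Real.mul_rpow hx0.le ha.le, div_mul_cancel₀ _ ha.ne']
  have haq : 0 < a ^ (-q) := Real.rpow_pos_of_pos ha _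
  have haq1 : a ^ (-q - 1) = a ^ (-q) / a := by
    rw [Real.rpow_sub ha, Real.rpow_one]
  rw [hbeq, haq1]
  have h2 : (1 + q * (1 - b / a)) * a ^ (-q) ≤ (b / a) ^ (-q) * a ^ (-q) :=
    mul_le_mul_of_nonneg_right hber haq.le
  calc a ^ (-q) + q * (a - b) * (a ^ (-q) / a)
      = (1 + q * (1 - b / a)) * a ^ (-q) := by field_simp
    _ ≤ (b / a) ^ (-q) * a ^ (-q) := h2

theorem stmt_1 (s : ℕ → ℝ) (hnonneg : ∀ k, 0 ≤ s k)
    (hmono : ∀ k, s (k + 1) ≤ s k)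
    (hlim : Tendsto s atTop (nhds 0))
    (α β : ℝ) (hα : 1 < α) (hβ : 0 < β)
    (hineq : ∃ N : ℕ, ∀ k ≥ N, s k ^ α ≤ β * (s k - s (k + 1))) :
    ∃ η > (0 : ℝ), ∃ N : ℕ, ∀ k ≥ N, s k ≤ η * (k : ℝ) ^ (-(1 / (α - 1))) := by
  obtain ⟨N, hN⟩ := hineq
  set q : ℝ := α - 1 with hq_def
  have hq : 0 < q := by simp only [hq_def]; linarith
  by_cases h0 : ∃ K, s K = 0
  · -- eventually zero case
    obtain ⟨K, hK⟩ := h0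
    refine ⟨1, one_pos, K + 1, fun k hk => ?_⟩
    have hsz : ∀ m, s (K + m) = 0 := by
      intro m
      induction m with
      | zero => simpa using hK
      | succ n ih =>
        have h1 := hmono (K + n)
        have h2 := hnonneg (K + n + 1)
        have : s (K + n + 1) = 0 := le_antisymm (by rw [← ih]; exact h1) h2
        simpa [← add_assoc] using this
    have hk0 : s k = 0 := by
      obtain ⟨m, rfl⟩ := Nat.exists_eq_add_of_le (le_trans (Nat.le_succ K) hk)
      exact hsz m
    rw [hk0, one_mul]
    have hkpos : (0 : ℝ) < (k : ℝ) := by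
      have h1 : 1 ≤ k := le_trans (Nat.le_add_left 1 K) hk
      exact_mod_cast h1
    exact (Real.rpow_pos_of_pos hkpos _).le
  · -- all terms positive
    push_neg at h0
    have hpos : ∀ k, 0 < s k := fun k => lt_of_le_of_ne (hnonneg k) (Ne.symm (h0 k))
    set t : ℕ → ℝ := fun k => s k ^ (-q) with ht_def
    have htpos : ∀ k, 0 < t k := fun k => Real.rpow_pos_of_pos (hpos k) _
    have hstep : ∀ k ≥ N, t k + q / β ≤ t (k + 1) := by
      intro k hk
      have hkey := aux_key (s k) (s (k + 1)) q (hpos (k + 1)) (hmono k) hq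
      have hineqk := hN k hk
      have hsa : 0 < s k := hpos k
      have hsapow : 0 < s k ^ α := Real.rpow_pos_of_pos hsa α
      have hrw : s k ^ (-q - 1) = (s k ^ α)⁻¹ := by
        have he : -q - 1 = -α := by rw [hq_def]; ring
        rw [he, Real.rpow_neg (hnonneg k)]
      rw [hrw] at hkey
      have hmid : q / β ≤ q * (s k - s (k + 1)) * (s k ^ α)⁻¹ := by
        have hd : s k ^ α / β ≤ s k - s (k + 1) := by
          rw [div_le_iff₀ hβ]; linarith [hineqk]
        have h1 : q * (s k ^ α / β) * (s k ^ α)⁻¹ ≤ q * (s k - s (k + 1)) * (s k ^ α)⁻¹ := by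
          apply mul_le_mul_of_nonneg_right _ (inv_nonneg.2 hsapow.le)
          exact mul_le_mul_of_nonneg_left hd hq.le
        calc q / β = q * (s k ^ α / β) * (s k ^ α)⁻¹ := by
              field_simp
          _ ≤ _ := h1
      calc t k + q / β ≤ t k + q * (s k - s (k + 1)) * (s k ^ α)⁻¹ := by linarith
        _ ≤ t (k + 1) := hkey
    have hind : ∀ m : ℕ, (m : ℝ) * (q / β) ≤ t (N + m) := by
      intro m
      induction m with
      | zero => simpa using (htpos N).le
      | succ n ih =>
        have h1 := hstep (N + n) (Nat.le_add_right N n)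
        push_cast
        have : (N + n) + 1 = N + (n + 1) := by ring
        rw [this] at h1
        nlinarith
    set c : ℝ := q / (2 * β) with hc_def
    have hc : 0 < c := by positivity
    refine ⟨c ^ (-(1 / q)), Real.rpow_pos_of_pos hc _, 2 * N + 2, fun k hk => ?_⟩
    have hkN : N ≤ k := by omega
    obtain ⟨m, rfl⟩ := Nat.exists_eq_add_of_le hkN
    have hkpos : (0 : ℝ) < ((N + m : ℕ) : ℝ) := by
      have : 0 < N + m := by omega
      exact_mod_cast this
    have hm2 : ((N + m : ℕ) : ℝ) ≤ 2 * (m : ℝ) := by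
      have : N + m ≤ 2 * m := by omega
      exact_mod_cast this
    have hlow : ((N + m : ℕ) : ℝ) * c ≤ t (N + m) := by
      have h1 := hind m
      have hqβ : 0 < q / β := by positivity
      have : ((N + m : ℕ) : ℝ) * c ≤ (m : ℝ) * (q / β) := by
        rw [hc_def, show q / (2 * β) = q / β / 2 by ring]
        nlinarith
      linarith
    have hkc : 0 < ((N + m : ℕ) : ℝ) * c := by positivity
    have hsk : s (N + m) = t (N + m) ^ (-(1 / q)) := by
      rw [ht_def]
      simp only
      rw [← Real.rpow_mul (hnonneg (N + m))]
      rw [show -q * -(1 / q) = 1 by field_simp]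
      rw [Real.rpow_one]
    have hanti : t (N + m) ^ (-(1 / q)) ≤ (((N + m : ℕ) : ℝ) * c) ^ (-(1 / q)) :=
      Real.rpow_le_rpow_of_nonpos hkc hlow (neg_nonpos.mpr (by positivity))
    have hmul : (((N + m : ℕ) : ℝ) * c) ^ (-(1 / q)) = c ^ (-(1 / q)) * ((N + m : ℕ) : ℝ) ^ (-(1 / q)) := by
      rw [mul_comm, Real.mul_rpow hc.le hkpos.le]
    rw [hsk]
    calc t (N + m) ^ (-(1 / q)) ≤ (((N + m : ℕ) : ℝ) * c) ^ (-(1 / q)) := hanti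
      _ = c ^ (-(1 / q)) * ((N + m : ℕ) : ℝ) ^ (-(1 / q)) := hmul
end

section
/- Let {s_k} ⊆ [0, ∞) be monotonically decreasing with s_k → 0, p ∈ (0,1], σ > 0, κ ∈ (0,1), and suppose that for all sufficiently large k: s_{k+1} ≤ (1 − p) s_k + p (1/σ)^{1/(2(1−κ))} (s_k − s_{k+1})^{1/(2(1−κ))}. Then there exists β > 0 such that s_k^{max{1, 2(1−κ)}} ≤ β (s_k − s_{k+1}) for all sufficiently large k. -/
open Filter

theorem stmt_15 (s : ℕ → ℝ) (hnonneg : ∀ k, 0 ≤ s k)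
    (hmono : ∀ k, s (k + 1) ≤ s k)
    (hlim : Tendsto s atTop (nhds 0))
    (p σ κ : ℝ) (hp : 0 < p ∧ p ≤ 1) (hσ : 0 < σ) (hκ : 0 < κ ∧ κ < 1)
    (h : ∃ N : ℕ, ∀ k ≥ N,
      s (k + 1) ≤ (1 - p) * s k +
        p * (1 / σ) ^ (1 / (2 * (1 - κ))) * (s k - s (k + 1)) ^ (1 / (2 * (1 - κ)))) :
    ∃ β > (0 : ℝ), ∃ N : ℕ, ∀ k ≥ N,
      s k ^ max 1 (2 * (1 - κ)) ≤ β * (s k - s (k + 1)) := by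
  obtain ⟨hp0, hp1⟩ := hp
  obtain ⟨hκ0, hκ1⟩ := hκ
  obtain ⟨N, hN⟩ := h
  set t : ℝ := 2 * (1 - κ) with ht_def
  have ht0 : 0 < t := by rw [ht_def]; linarith
  set r : ℝ := 1 / t with hr_def
  have hr0 : 0 < r := by rw [hr_def]; positivity
  have hrt : r * t = 1 := by rw [hr_def]; field_simp
  set c : ℝ := (1 / σ) ^ r with hc_def
  have hc0 : 0 < c := Real.rpow_pos_of_pos (by positivity) r
  have h1 : ∀ᶠ k in atTop, s k < 1 := hlim.eventually (gt_mem_nhds (by norm_num))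
  obtain ⟨N1, hN1⟩ := eventually_atTop.mp h1
  have key : ∀ k ≥ max N N1, p * s k ≤ (s k - s (k + 1)) + p * c * (s k - s (k + 1)) ^ r := by
    intro k hk
    have := hN k (le_trans (le_max_left _ _) hk)
    nlinarith [hnonneg k]
  have hΔnn : ∀ k, 0 ≤ s k - s (k + 1) := fun k => sub_nonneg.mpr (hmono k)
  have hΔle1 : ∀ k ≥ max N N1, s k - s (k + 1) ≤ 1 := by
    intro k hk
    have h2 := hN1 k (le_trans (le_max_right _ _) hk)
    have := hnonneg (k + 1)
    linarith
  rcases le_or_gt t 1 with hcase | hcase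
  · -- max = 1, r ≥ 1
    have hmax : max 1 t = 1 := max_eq_left hcase
    refine ⟨1 / p + c, by positivity, max N N1, fun k hk => ?_⟩
    rw [hmax, Real.rpow_one]
    set Δ := s k - s (k + 1) with hΔ
    rcases eq_or_lt_of_le (hΔnn k) with hz | hz
    · have h0 : Δ ^ r = 0 := by rw [hΔ, ← hz]; exact Real.zero_rpow (ne_of_gt hr0)
      have hk2 := key k hk
      rw [← hΔ, h0] at hk2
      have hs0 : s k = 0 := le_antisymm (by nlinarith) (hnonneg k)
      rw [hs0, hΔ, ← hz, mul_zero]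
    · have hr1 : 1 ≤ r := by rw [hr_def, le_div_iff₀ ht0]; linarith
      have hΔpos : (0:ℝ) < Δ := hz
      have hΔr : Δ ^ r ≤ Δ := by
        calc Δ ^ r ≤ Δ ^ (1:ℝ) :=
              Real.rpow_le_rpow_of_exponent_ge hΔpos (hΔle1 k hk) hr1
          _ = Δ := Real.rpow_one Δ
      have hk2 := key k hk
      rw [← hΔ] at hk2
      have h3 : s k ≤ (Δ + p * c * Δ) / p := by
        rw [le_div_iff₀ hp0]
        nlinarith [mul_le_mul_of_nonneg_left hΔr (le_of_lt (mul_pos hp0 hc0))]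
      have h4 : (Δ + p * c * Δ) / p = (1 / p + c) * Δ := by field_simp
      linarith
  · -- max = t, r < 1
    have hmax : max 1 t = t := max_eq_right (le_of_lt hcase)
    refine ⟨(1 / p + c) ^ t, Real.rpow_pos_of_pos (by positivity) t, max N N1,
      fun k hk => ?_⟩
    rw [hmax]
    set Δ := s k - s (k + 1) with hΔ
    rcases eq_or_lt_of_le (hΔnn k) with hz | hz
    · have h0 : Δ ^ r = 0 := by rw [hΔ, ← hz]; exact Real.zero_rpow (ne_of_gt hr0)
      have hk2 := key k hk
      rw [← hΔ, h0] at hk2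
      have hs0 : s k = 0 := le_antisymm (by nlinarith) (hnonneg k)
      rw [hs0, Real.zero_rpow (ne_of_gt ht0), hΔ, ← hz, mul_zero]
    · have hr1 : r ≤ 1 := by rw [hr_def, div_le_one ht0]; linarith
      have hΔpos : (0:ℝ) < Δ := hz
      have hΔr : Δ ≤ Δ ^ r := by
        calc Δ = Δ ^ (1:ℝ) := (Real.rpow_one Δ).symm
          _ ≤ Δ ^ r := Real.rpow_le_rpow_of_exponent_ge hΔpos (hΔle1 k hk) hr1
      have hk2 := key k hk
      rw [← hΔ] at hk2
      have hΔrnn : 0 ≤ Δ ^ r := Real.rpow_nonneg (le_of_lt hΔpos) r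
      have hstep : s k ≤ (1 / p + c) * Δ ^ r := by
        have h3 : s k ≤ (Δ ^ r + p * c * Δ ^ r) / p := by
          rw [le_div_iff₀ hp0]
          nlinarith
        have h4 : (Δ ^ r + p * c * Δ ^ r) / p = (1 / p + c) * Δ ^ r := by
          field_simp
        linarith
      calc s k ^ t ≤ ((1 / p + c) * Δ ^ r) ^ t :=
            Real.rpow_le_rpow (hnonneg k) hstep (le_of_lt ht0)
        _ = (1 / p + c) ^ t * (Δ ^ r) ^ t := by
            rw [Real.mul_rpow (by positivity) hΔrnn]
        _ = (1 / p + c) ^ t * Δ := by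
            rw [← Real.rpow_mul (le_of_lt hΔpos), hrt, Real.rpow_one]
end
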